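/- arXiv:1709.06457 — 4 statements merged into one kernel-verified Lean document; each statement's English description precedes it below -/
import Mathlib

section
/- Let ε, μ > 0 and let d ∈ {1,2}. Suppose ζ : ℝ×ℝ^d → ℝ, Φ, P : {(t,X,z) : -1 ≤ z ≤ εζ(t,X)} → ℝ are smooth functions (with Φ, P smooth up to the boundary) such that: (i) the dimensionless Bernoulli equation ∂_tΦ + z/ε + (ε/2)|∇Φ|² + (ε/(2μ))(∂_zΦ)² = -(1/ε)(P - P_atm) holds for all -1 ≤ z ≤ εζ(t,X); (ii) the bottom boundary condition ∂_zΦ = 0 holds at z = -1; (iii) the kinematic boundary condition μ∂_tζ = ∂_zΦ - εμ∇ζ·∇Φ holds at z = εζ(t,X); (iv) the pressure condition P = P_atm holds at z = εζ(t,X). Define ψ(t,X) = Φ(t,X,εζ(t,X)), Φ_b(t,X) = Φ(t,X,-1), P_b(t,X) = P(t,X,-1), and the hydrostatic reconstruction ζ_H = (P_b - P_atm - 1)/ε. Then at every (t,X) the exact reconstruction formula holds: ζ = ζ_H + ∂_tΦ_b - ∂_tψ + (ε/2)(|∇Φ_b|² - |∇ψ|²) + (ε/(2μ))(1 + ε²μ|∇ζ(t,X)|²)(∂_zΦ(t,X,εζ(t,X)))².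 -/
/-!
Statement 0: the exact reconstruction formula for the surface elevation from
the bottom pressure, in dimensionless variables.
-/

noncomputable section

/-- Time partial derivative of a function of `(t, X, z)`. -/
def dT {d : ℕ} (F : ℝ → (Fin d → ℝ) → ℝ → ℝ) (t : ℝ) (X : Fin d → ℝ) (z : ℝ) : ℝ :=
  deriv (fun s => F s X z) t

/-- Vertical partial derivative of a function of `(t, X, z)`. -/
def dZ {d : ℕ} (F : ℝ → (Fin d → ℝ) → ℝ → ℝ) (t : ℝ) (X : Fin d → ℝ) (z : ℝ) : ℝ :=
  deriv (fun w => F t X w) z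

/-- Horizontal partial derivative (in the `i`-th direction) of a function of `(t, X, z)`. -/
def dXi {d : ℕ} (F : ℝ → (Fin d → ℝ) → ℝ → ℝ) (i : Fin d) (t : ℝ) (X : Fin d → ℝ)
    (z : ℝ) : ℝ :=
  deriv (fun s => F t (Function.update X i s) z) (X i)

/-- Time partial derivative of a function of `(t, X)`. -/
def dT2 {d : ℕ} (F : ℝ → (Fin d → ℝ) → ℝ) (t : ℝ) (X : Fin d → ℝ) : ℝ :=
  deriv (fun s => F s X) t

/-- Horizontal partial derivative (in the `i`-th direction) of a function of `(t, X)`. -/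
def dXi2 {d : ℕ} (F : ℝ → (Fin d → ℝ) → ℝ) (i : Fin d) (t : ℝ) (X : Fin d → ℝ) : ℝ :=
  deriv (fun s => F t (Function.update X i s)) (X i)

/-- **Exact reconstruction formula.**  If `Φ` satisfies the (dimensionless) Bernoulli
equation in the fluid domain, the bottom boundary condition, the kinematic boundary
condition and the pressure condition at the surface, then the surface elevation `ζ`
is given exactly in terms of the hydrostatic reconstruction `ζ_H` and trace quantities. -/
theorem exact_reconstruction_formula
    {d : ℕ} (hd : d = 1 ∨ d = 2) (ε μ : ℝ) (hε : 0 < ε) (hμ : 0 < μ) (Patm : ℝ)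
    (ζ : ℝ → (Fin d → ℝ) → ℝ) (Φ P : ℝ → (Fin d → ℝ) → ℝ → ℝ)
    -- smoothness (`Φ`, `P` smooth up to the boundary, i.e. smooth extensions)
    (hζsmooth : ContDiff ℝ (⊤ : ℕ∞) (fun p : ℝ × (Fin d → ℝ) => ζ p.1 p.2))
    (hΦsmooth : ContDiff ℝ (⊤ : ℕ∞) (fun p : ℝ × (Fin d → ℝ) × ℝ => Φ p.1 p.2.1 p.2.2))
    (hPsmooth : ContDiff ℝ (⊤ : ℕ∞) (fun p : ℝ × (Fin d → ℝ) × ℝ => P p.1 p.2.1 p.2.2))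
    -- the fluid domain is nonempty: the free surface lies above the bottom
    (hdom : ∀ t X, (-1 : ℝ) < ε * ζ t X)
    -- (i) dimensionless Bernoulli equation in the fluid domain
    (hBernoulli : ∀ t X z, -1 ≤ z → z ≤ ε * ζ t X →
      dT Φ t X z + z / ε + (ε / 2) * ∑ i, (dXi Φ i t X z) ^ 2
          + (ε / (2 * μ)) * (dZ Φ t X z) ^ 2
        = -(1 / ε) * (P t X z - Patm))
    -- (ii) bottom boundary condition
    (hBottom : ∀ t X, dZ Φ t X (-1) = 0)
    -- (iii) kinematic boundary condition at the free surface
    (hKinematic : ∀ t X, μ * dT2 ζ t X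
        = dZ Φ t X (ε * ζ t X) - ε * μ * ∑ i, dXi2 ζ i t X * dXi Φ i t X (ε * ζ t X))
    -- (iv) pressure condition at the free surface
    (hPsurf : ∀ t X, P t X (ε * ζ t X) = Patm) :
    ∀ t X,
      ζ t X
        = (P t X (-1) - Patm - 1) / ε
          + dT2 (fun t X => Φ t X (-1)) t X
          - dT2 (fun t X => Φ t X (ε * ζ t X)) t X
          + (ε / 2) * ((∑ i, (dXi2 (fun t X => Φ t X (-1)) i t X) ^ 2)
              - ∑ i, (dXi2 (fun t X => Φ t X (ε * ζ t X)) i t X) ^ 2)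
          + (ε / (2 * μ)) * (1 + ε ^ 2 * μ * ∑ i, (dXi2 ζ i t X) ^ 2)
              * (dZ Φ t X (ε * ζ t X)) ^ 2 := by

  intro t X
  -- differentiability of the smooth extensions
  have hF : Differentiable ℝ (fun p : ℝ × (Fin d → ℝ) × ℝ => Φ p.1 p.2.1 p.2.2) :=
    hΦsmooth.differentiable (by simp)
  set L : (ℝ × (Fin d → ℝ) × ℝ) →L[ℝ] ℝ :=
    fderiv ℝ (fun p : ℝ × (Fin d → ℝ) × ℝ => Φ p.1 p.2.1 p.2.2) (t, X, ε * ζ t X) with hLdef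
  -- derivatives of ζ
  have hζT : HasDerivAt (fun s => ζ s X) (dT2 ζ t X) t := by
    have hdiff : DifferentiableAt ℝ (fun s => ζ s X) t := by
      have h := (hζsmooth.differentiable (by simp)) (t, X)
      exact h.comp (f := fun s : ℝ => ((s, X) : ℝ × (Fin d → ℝ))) t (DifferentiableAt.prodMk (hasDerivAt_id t).differentiableAt (differentiableAt_const _))
    exact hdiff.hasDerivAt
  have hζXi : ∀ i, HasDerivAt (fun s => ζ t (Function.update X i s)) (dXi2 ζ i t X) (X i) := by
    intro i
    have hdiff : DifferentiableAt ℝ ((fun p : ℝ × (Fin d → ℝ) => ζ p.1 p.2) ∘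
        (fun s : ℝ => (t, Function.update X i s))) (X i) :=
      DifferentiableAt.comp _ ((hζsmooth.differentiable (by simp)) _)
        (DifferentiableAt.prodMk (differentiableAt_const _) (hasDerivAt_update X i (X i)).differentiableAt)
    exact hdiff.hasDerivAt
  -- partial derivatives of Φ at the surface, expressed via the Fréchet derivative L
  have hT : L ((1:ℝ), (0 : Fin d → ℝ), (0:ℝ)) = dT Φ t X (ε * ζ t X) := by
    have hc : HasDerivAt (fun s : ℝ => ((s, X, ε * ζ t X) : ℝ × (Fin d → ℝ) × ℝ))
        ((1:ℝ), (0 : Fin d → ℝ), (0:ℝ)) t :=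
      HasDerivAt.prodMk (hasDerivAt_id t) (hasDerivAt_const _ _)
    exact ((hF _).hasFDerivAt.comp_hasDerivAt t hc).deriv.symm
  have hZ : L ((0:ℝ), (0 : Fin d → ℝ), (1:ℝ)) = dZ Φ t X (ε * ζ t X) := by
    have hc : HasDerivAt (fun w : ℝ => ((t, X, w) : ℝ × (Fin d → ℝ) × ℝ))
        ((0:ℝ), (0 : Fin d → ℝ), (1:ℝ)) (ε * ζ t X) :=
      HasDerivAt.prodMk (hasDerivAt_const _ _) (HasDerivAt.prodMk (hasDerivAt_const _ _) (hasDerivAt_id _))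
    exact ((hF _).hasFDerivAt.comp_hasDerivAt _ hc).deriv.symm
  have hXiL : ∀ i, L ((0:ℝ), Pi.single i (1:ℝ), (0:ℝ)) = dXi Φ i t X (ε * ζ t X) := by
    intro i
    have hc : HasDerivAt
        (fun s : ℝ => ((t, Function.update X i s, ε * ζ t X) : ℝ × (Fin d → ℝ) × ℝ))
        ((0:ℝ), Pi.single i (1:ℝ), (0:ℝ)) (X i) :=
      HasDerivAt.prodMk (hasDerivAt_const _ _) (HasDerivAt.prodMk (hasDerivAt_update X i (X i)) (hasDerivAt_const _ _))
    have key := ((hF _).hasFDerivAt.comp_hasDerivAt (X i) hc).deriv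
    rw [Function.update_eq_self] at key
    exact key.symm
  -- chain rule for the time derivative of the surface trace
  have hψT : dT2 (fun t X => Φ t X (ε * ζ t X)) t X
      = dT Φ t X (ε * ζ t X) + (ε * dT2 ζ t X) * dZ Φ t X (ε * ζ t X) := by
    have hc : HasDerivAt (fun s : ℝ => ((s, X, ε * ζ s X) : ℝ × (Fin d → ℝ) × ℝ))
        ((1:ℝ), (0 : Fin d → ℝ), ε * dT2 ζ t X) t :=
      HasDerivAt.prodMk (hasDerivAt_id t) (HasDerivAt.prodMk (hasDerivAt_const _ _) (hζT.const_mul ε))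
    have hψ : dT2 (fun t X => Φ t X (ε * ζ t X)) t X
        = L ((1:ℝ), (0 : Fin d → ℝ), ε * dT2 ζ t X) :=
      ((hF _).hasFDerivAt.comp_hasDerivAt t hc).deriv
    have hvec : ((1:ℝ), (0 : Fin d → ℝ), ε * dT2 ζ t X)
        = ((1:ℝ), (0 : Fin d → ℝ), (0:ℝ))
          + (ε * dT2 ζ t X) • ((0:ℝ), (0 : Fin d → ℝ), (1:ℝ)) := by
      simp [Prod.ext_iff]
    rw [hψ, hvec, map_add, map_smul, hT, hZ, smul_eq_mul]
  -- chain rule for the horizontal derivatives of the surface trace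
  have hψXi : ∀ i, dXi2 (fun t X => Φ t X (ε * ζ t X)) i t X
      = dXi Φ i t X (ε * ζ t X) + (ε * dXi2 ζ i t X) * dZ Φ t X (ε * ζ t X) := by
    intro i
    have hc : HasDerivAt
        (fun s : ℝ => ((t, Function.update X i s, ε * ζ t (Function.update X i s)) :
            ℝ × (Fin d → ℝ) × ℝ))
        ((0:ℝ), Pi.single i (1:ℝ), ε * dXi2 ζ i t X) (X i) :=
      HasDerivAt.prodMk (hasDerivAt_const _ _)
        (HasDerivAt.prodMk (hasDerivAt_update X i (X i)) ((hζXi i).const_mul ε))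
    have hψ : dXi2 (fun t X => Φ t X (ε * ζ t X)) i t X
        = L ((0:ℝ), Pi.single i (1:ℝ), ε * dXi2 ζ i t X) := by
      have := ((hF _).hasFDerivAt.comp_hasDerivAt (X i) hc).deriv
      rw [Function.update_eq_self] at this
      exact this
    have hvec : ((0:ℝ), Pi.single i (1:ℝ), ε * dXi2 ζ i t X)
        = ((0:ℝ), Pi.single i (1:ℝ), (0:ℝ))
          + (ε * dXi2 ζ i t X) • ((0:ℝ), (0 : Fin d → ℝ), (1:ℝ)) := by
      simp [Prod.ext_iff]
    rw [hψ, hvec, map_add, map_smul, hXiL i, hZ, smul_eq_mul]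
  -- bottom traces are literal partial derivatives
  have hbT : dT2 (fun t X => Φ t X (-1)) t X = dT Φ t X (-1) := rfl
  have hbXi : ∀ i, dXi2 (fun t X => Φ t X (-1)) i t X = dXi Φ i t X (-1) := fun _ => rfl
  -- the Bernoulli equation at the bottom and at the surface
  have hge : (-1 : ℝ) ≤ ε * ζ t X := (hdom t X).le
  have hb := hBernoulli t X (-1) le_rfl hge
  rw [hBottom t X] at hb
  have hs := hBernoulli t X (ε * ζ t X) hge le_rfl
  rw [hPsurf t X, sub_self, mul_zero, mul_div_cancel_left₀ _ hε.ne'] at hs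
  -- kinematic boundary condition, solved for the time derivative of ζ
  have hk : dT2 ζ t X
      = dZ Φ t X (ε * ζ t X) / μ - ε * ∑ i, dXi2 ζ i t X * dXi Φ i t X (ε * ζ t X) := by
    have h := hKinematic t X
    field_simp
    linear_combination h
  -- expansion of the sum of squares of horizontal derivatives of the surface trace
  have hsum : ∑ i, (dXi2 (fun t X => Φ t X (ε * ζ t X)) i t X) ^ 2
      = (∑ i, (dXi Φ i t X (ε * ζ t X)) ^ 2)
        + 2 * ε * dZ Φ t X (ε * ζ t X)
            * (∑ i, dXi2 ζ i t X * dXi Φ i t X (ε * ζ t X))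
        + ε ^ 2 * (dZ Φ t X (ε * ζ t X)) ^ 2 * ∑ i, (dXi2 ζ i t X) ^ 2 := by
    calc ∑ i, (dXi2 (fun t X => Φ t X (ε * ζ t X)) i t X) ^ 2
        = ∑ i, ((dXi Φ i t X (ε * ζ t X)) ^ 2
            + 2 * ε * dZ Φ t X (ε * ζ t X)
                * (dXi2 ζ i t X * dXi Φ i t X (ε * ζ t X))
            + ε ^ 2 * (dZ Φ t X (ε * ζ t X)) ^ 2 * (dXi2 ζ i t X) ^ 2) :=
          Finset.sum_congr rfl (fun i _ => by rw [hψXi i]; ring)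
      _ = _ := by
          rw [Finset.sum_add_distrib, Finset.sum_add_distrib, ← Finset.mul_sum,
            ← Finset.mul_sum]
  -- conclude by algebra
  rw [hψT, hbT, hsum]
  simp only [hbXi]
  have hμμ : μ * μ⁻¹ = 1 := mul_inv_cancel₀ hμ.ne'
  linear_combination hs - hb + (ε * dZ Φ t X (ε * ζ t X)) * hk
    - (ε ^ 3 * dZ Φ t X (ε * ζ t X) ^ 2 * (∑ i, dXi2 ζ i t X ^ 2) / 2) * hμμ
end
end

section
/- Let μ > 0. The function λ_μ is differentiable on (0,∞) with λ_μ'(r) = (tanh(√μ r) + √μ r·(1 - tanh²(√μ r))) / (2√μ·λ_μ(r)) for r > 0; moreover 0 < λ_μ'(r) < 1 for every r > 0, λ_μ'(r) → 1 as r → 0⁺, and λ_μ'(r) → 0 as r → +∞. -/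
noncomputable section

open Filter

/-- The dispersion function of the linear water wave problem. -/
def lamμ (μ : ℝ) (r : ℝ) : ℝ :=
  Real.sign r * Real.sqrt (r * Real.tanh (Real.sqrt μ * r) / Real.sqrt μ)

/-!
For `r > 0` and `x = √μ r` we have `λ_μ(r) = √(x tanh x) / √μ`, so `λ_μ'(r) = G(√μ r)`, where
`G = d/dx √(x tanh x)` is `groupVelocity`; everything reduces to properties of `G` on `(0, ∞)`.
With `t = tanh x`, the inequalities `x (1 - t²) < t` (that is, `2x < sinh 2x`) and `t < x` give
`(t + x (1 - t²))² < 4 x t`, i.e. `G < 1`. As `x → 0⁺`, `G = (t/x + 1 - t²) / (2 √(t/x))` with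
`t/x → 1`; for large `x` the numerator is at most `2t`, so `G x ≤ 1/√x`.
-/

open Real Topology

namespace Real

theorem hasDerivAt_tanh (x : ℝ) : HasDerivAt tanh (1 - tanh x ^ 2) x := by
  have hcosh := cosh_pos x
  have h := (hasDerivAt_sinh x).div (hasDerivAt_cosh x) hcosh.ne'
  rw [show tanh = sinh / cosh from funext tanh_eq_sinh_div_cosh]
  refine h.congr_deriv ?_
  rw [Pi.div_apply]
  field_simp

theorem tanh_pos {x : ℝ} (hx : 0 < x) : 0 < tanh x := by
  rw [tanh_eq_sinh_div_cosh]
  exact div_pos (sinh_pos_iff.mpr hx) (cosh_pos x)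

theorem tanh_lt_self {x : ℝ} (hx : 0 < x) : tanh x < x := by
  have hdiff : Differentiable ℝ tanh := fun y => (hasDerivAt_tanh y).differentiableAt
  have := (convex_Ici (0 : ℝ)).image_sub_lt_mul_sub_of_deriv_lt hdiff.continuous.continuousOn
    hdiff.differentiableOn (C := 1) (fun y hy => ?_) 0 Set.self_mem_Ici x hx.le hx
  · simpa [tanh_zero] using this
  rw [interior_Ici] at hy
  rw [(hasDerivAt_tanh y).deriv]
  linarith [pow_pos (tanh_pos hy) 2]

theorem mul_one_sub_tanh_sq_lt_tanh {x : ℝ} (hx : 0 < x) : x * (1 - tanh x ^ 2) < tanh x := by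
  have hcosh := cosh_pos x
  have h2x : 2 * x < 2 * sinh x * cosh x := sinh_two_mul x ▸ self_lt_sinh_iff.mpr (by linarith)
  rw [tanh_eq_sinh_div_cosh, div_pow, one_sub_div (by positivity), cosh_sq_sub_sinh_sq,
    mul_one_div, div_lt_div_iff₀ (by positivity) hcosh]
  nlinarith [mul_lt_mul_of_pos_right h2x hcosh]

theorem tendsto_tanh_div_self :
    Tendsto (fun x => tanh x / x) (𝓝[≠] 0) (𝓝 1) := by
  have h := hasDerivAt_iff_tendsto_slope.mp (by simpa using hasDerivAt_tanh 0)
  refine h.congr' ?_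
  filter_upwards with y
  simp [slope_def_field, tanh_zero]

end Real

def groupVelocity (x : ℝ) : ℝ := (tanh x + x * (1 - tanh x ^ 2)) / (2 * √(x * tanh x))

theorem hasDerivAt_sqrt_mul_tanh {x : ℝ} (hx : 0 < x) :
    HasDerivAt (fun y => √(y * tanh y)) (groupVelocity x) x := by
  have h := ((hasDerivAt_id x).mul (hasDerivAt_tanh x)).sqrt (mul_pos hx (tanh_pos hx)).ne'
  simpa [groupVelocity] using h

theorem groupVelocity_pos {x : ℝ} (hx : 0 < x) : 0 < groupVelocity x := by
  have ht := tanh_pos hx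
  have : 0 < 1 - tanh x ^ 2 := sub_pos.mpr (tanh_sq_lt_one x)
  unfold groupVelocity
  positivity

theorem groupVelocity_lt_one {x : ℝ} (hx : 0 < x) : groupVelocity x < 1 := by
  have ht := tanh_pos hx
  have hxt := tanh_lt_self hx
  have hkey := mul_one_sub_tanh_sq_lt_tanh hx
  have hnum : 0 ≤ tanh x + x * (1 - tanh x ^ 2) := by
    nlinarith [tanh_sq_lt_one x]
  have hsq : (tanh x + x * (1 - tanh x ^ 2)) ^ 2 < (2 * √(x * tanh x)) ^ 2 := by
    rw [mul_pow, sq_sqrt (by positivity)]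
    nlinarith [mul_pos ht (sub_pos.mpr hxt)]
  rw [groupVelocity, div_lt_one (by positivity)]
  exact lt_of_pow_lt_pow_left₀ 2 (by positivity) hsq

theorem groupVelocity_le_inv_sqrt {x : ℝ} (hx : 0 < x) : groupVelocity x ≤ (√x)⁻¹ := by
  have ht := tanh_pos hx
  have hN : tanh x + x * (1 - tanh x ^ 2) ≤ 2 * tanh x := by
    linarith [mul_one_sub_tanh_sq_lt_tanh hx]
  calc groupVelocity x ≤ 2 * tanh x / (2 * √(x * tanh x)) := by
        unfold groupVelocity; gcongr
    _ = √(tanh x) / √x := by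
        rw [sqrt_mul hx.le]
        field_simp
        rw [sq_sqrt ht.le]
    _ ≤ (√x)⁻¹ := by
        rw [div_eq_mul_inv]
        exact mul_le_of_le_one_left (by positivity) (sqrt_le_one.mpr (tanh_lt_one x).le)

theorem groupVelocity_eq_of_pos {x : ℝ} (hx : 0 < x) :
    groupVelocity x = (tanh x / x + (1 - tanh x ^ 2)) / (2 * √(tanh x / x)) := by
  have ht := tanh_pos hx
  rw [groupVelocity, sqrt_mul hx.le, sqrt_div ht.le]
  field_simp
  rw [sq_sqrt hx.le]
  ring

theorem tendsto_groupVelocity_nhdsGT_zero : Tendsto groupVelocity (𝓝[>] 0) (𝓝 1) := by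
  have hq := tendsto_tanh_div_self.mono_left (nhdsWithin_mono 0 fun y (hy : 0 < y) => hy.ne')
  have ht : Tendsto (fun x => tanh x) (𝓝[>] 0) (𝓝 0) := by
    simpa [tanh_zero] using
      ((hasDerivAt_tanh 0).continuousAt.tendsto).mono_left nhdsWithin_le_nhds
  have h := (hq.add ((tendsto_const_nhds (x := (1 : ℝ))).sub (ht.pow 2))).div
    (hq.sqrt.const_mul 2) (by norm_num)
  norm_num at h
  refine h.congr' ?_
  filter_upwards [self_mem_nhdsWithin] with x hx
  exact (groupVelocity_eq_of_pos hx).symm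

theorem tendsto_groupVelocity_atTop : Tendsto groupVelocity atTop (𝓝 0) := by
  have h : Tendsto (fun x => (√x)⁻¹) atTop (𝓝 0) :=
    tendsto_sqrt_atTop.inv_tendsto_atTop
  refine tendsto_of_tendsto_of_tendsto_of_le_of_le' tendsto_const_nhds h ?_ ?_
  all_goals filter_upwards [eventually_gt_atTop 0] with x hx
  exacts [(groupVelocity_pos hx).le, groupVelocity_le_inv_sqrt hx]

theorem lamμ_eq_of_pos {μ r : ℝ} (hμ : 0 < μ) (hr : 0 < r) :
    lamμ μ r = √(√μ * r * tanh (√μ * r)) / √μ := by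
  have hs : 0 < √μ := sqrt_pos.mpr hμ
  rw [lamμ, sign_of_pos hr, one_mul, ← sqrt_sq hs.le, ← sqrt_div' _ (sq_nonneg √μ),
    sqrt_sq hs.le]
  congr 1
  field_simp

theorem hasDerivAt_lamμ {μ r : ℝ} (hμ : 0 < μ) (hr : 0 < r) :
    HasDerivAt (lamμ μ) (groupVelocity (√μ * r)) r := by
  have hs : 0 < √μ := sqrt_pos.mpr hμ
  have h := ((hasDerivAt_sqrt_mul_tanh (mul_pos hs hr)).comp r
    ((hasDerivAt_id r).const_mul √μ)).div_const √μ
  have heq : lamμ μ =ᶠ[𝓝 r] fun y => √(√μ * y * tanh (√μ * y)) / √μ :=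
    eventually_of_mem (Ioi_mem_nhds hr) fun y hy => lamμ_eq_of_pos hμ hy
  refine (h.congr_of_eventuallyEq heq).congr_deriv ?_
  field_simp

theorem groupVelocity_sqrt_mul_eq_div_lamμ {μ r : ℝ} (hμ : 0 < μ) (hr : 0 < r) :
    groupVelocity (√μ * r) =
      (tanh (√μ * r) + √μ * r * (1 - tanh (√μ * r) ^ 2)) / (2 * √μ * lamμ μ r) := by
  have hs : 0 < √μ := sqrt_pos.mpr hμ
  rw [lamμ_eq_of_pos hμ hr, groupVelocity]
  field_simp

theorem lamμ_deriv_formula_bounds_limits (μ : ℝ) (hμ : 0 < μ) :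
    (∀ r : ℝ, 0 < r →
      HasDerivAt (lamμ μ)
        ((Real.tanh (Real.sqrt μ * r)
            + Real.sqrt μ * r * (1 - (Real.tanh (Real.sqrt μ * r)) ^ 2))
          / (2 * Real.sqrt μ * lamμ μ r)) r)
    ∧ (∀ r : ℝ, 0 < r → 0 < deriv (lamμ μ) r ∧ deriv (lamμ μ) r < 1)
    ∧ Tendsto (deriv (lamμ μ)) (nhdsWithin 0 (Set.Ioi 0)) (nhds 1)
    ∧ Tendsto (deriv (lamμ μ)) atTop (nhds 0) := by
  have hs : 0 < √μ := sqrt_pos.mpr hμ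
  have hderiv : ∀ r, 0 < r → deriv (lamμ μ) r = groupVelocity (√μ * r) :=
    fun r hr => (hasDerivAt_lamμ hμ hr).deriv
  refine ⟨fun r hr => groupVelocity_sqrt_mul_eq_div_lamμ hμ hr ▸ hasDerivAt_lamμ hμ hr,
    fun r hr => ?_, ?_, ?_⟩
  · rw [hderiv r hr]
    exact ⟨groupVelocity_pos (mul_pos hs hr), groupVelocity_lt_one (mul_pos hs hr)⟩
  · have hscale : Tendsto (√μ * ·) (𝓝[>] 0) (𝓝[>] 0) :=
      tendsto_comap.mono_left (comap_mulLeft_nhdsGT_zero hs).ge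
    refine (tendsto_groupVelocity_nhdsGT_zero.comp hscale).congr' ?_
    filter_upwards [self_mem_nhdsWithin] with r hr using (hderiv r hr).symm
  · refine (tendsto_groupVelocity_atTop.comp (tendsto_id.const_mul_atTop hs)).congr' ?_
    filter_upwards [eventually_gt_atTop 0] with r hr using (hderiv r hr).symm
end
end

section
/- Let a > 0 and let F, G ∈ L¹(ℝ, ℂ) be continuous functions whose Fourier transforms F̂, Ĝ are continuous and compactly supported. Then cosh(aD)(F·G) = (cosh(aD)F)·(cosh(aD)G) + (sinh(aD)F)·(sinh(aD)G) pointwise on ℝ, where cosh(aD)h and sinh(aD)h denote the Fourier multiplier operators with symbols cosh(aξ) and sinh(aξ) respectively. -/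
/-!
Write `Φ = 𝓕 F` and `Ψ = 𝓕 G`. Fourier inversion `F = 𝓕⁻ Φ` and Fubini give the convolution
formula `𝓕 (F * G) = Φ ⋆ Ψ`, so `m(D)(F G)(x)` becomes the double integral
`∫∫ 𝐞((η + ζ) x) m(η + ζ) Φ(η) Ψ(ζ)`, absolutely convergent because `Φ` and `Ψ` have compact
support. If the symbol obeys an addition formula `m(η + ζ) = p₁(η) q₁(ζ) + p₂(η) q₂(ζ)`, as
`cosh (a ·)` does, the double integral splits into products of the one-variable integrals
defining `pᵢ(D) F` and `qᵢ(D) G`.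
-/

noncomputable section

open FourierTransform

/-- The Fourier multiplier operator on `ℝ` with (real) symbol `m`, defined as
`h ↦ ℱ⁻¹(m·ĥ)`. -/
def fourierMult (m : ℝ → ℝ) (h : ℝ → ℂ) : ℝ → ℂ :=
  𝓕⁻ (fun ξ => (m ξ : ℂ) * 𝓕 h ξ)

open MeasureTheory Convolution

lemma fourier_apply_eq_integral_mul (f : ℝ → ℂ) (ξ : ℝ) :
    𝓕 f ξ = ∫ y, (𝐞 (-(y * ξ)) : ℂ) * f y := by
  simp_rw [Real.fourier_real_eq, Circle.smul_def, smul_eq_mul]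

lemma fourierInv_apply_eq_integral_mul (f : ℝ → ℂ) (x : ℝ) :
    𝓕⁻ f x = ∫ ξ, (𝐞 (ξ * x) : ℂ) * f ξ := by
  simp_rw [Real.fourierInv_eq_fourier_neg, fourier_apply_eq_integral_mul, mul_neg, neg_neg]

lemma fourierMult_apply (m : ℝ → ℝ) (h : ℝ → ℂ) (x : ℝ) :
    fourierMult m h x = ∫ ξ, (𝐞 (ξ * x) : ℂ) * (m ξ * 𝓕 h ξ) :=
  fourierInv_apply_eq_integral_mul _ x

lemma fourier_mul_eq_convolution {F G : ℝ → ℂ} (hFc : Continuous F) (hFi : Integrable F)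
    (hGi : Integrable G) (hΦ : Integrable (𝓕 F)) :
    𝓕 (F * G) = 𝓕 F ⋆[ContinuousLinearMap.mul ℂ ℂ] 𝓕 G := by
  ext ξ
  let k : ℝ → ℝ → ℂ := fun y η => 𝐞 (-(y * (ξ - η))) * (G y * 𝓕 F η)
  have hk : Integrable (Function.uncurry k) (volume.prod volume) := by
    refine (hGi.mul_prod hΦ).bdd_mul (c := 1) (Continuous.aestronglyMeasurable ?_)
      (.of_forall fun p => (Circle.norm_coe _).le)
    fun_prop
  calc 𝓕 (F * G) ξ = ∫ y, ∫ η, k y η := by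
        rw [fourier_apply_eq_integral_mul]
        refine integral_congr_ae (.of_forall fun y => ?_)
        dsimp only
        rw [Pi.mul_apply, ← hFc.fourierInv_fourier_eq hFi hΦ, fourierInv_apply_eq_integral_mul,
          ← integral_mul_const, ← integral_const_mul]
        refine integral_congr_ae (.of_forall fun η => ?_)
        simp only [k]
        rw [show -(y * (ξ - η)) = -(y * ξ) + η * y by ring, AddChar.map_add_eq_mul, Circle.coe_mul]
        ring
    _ = ∫ η, ∫ y, k y η := integral_integral_swap hk
    _ = _ := by
        rw [convolution_def]
        refine integral_congr_ae (.of_forall fun η => ?_)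
        simp only [k, ContinuousLinearMap.mul_apply', fourier_apply_eq_integral_mul G,
          ← integral_const_mul]
        refine integral_congr_ae (.of_forall fun y => ?_)
        ring

lemma hasCompactSupport_mul_comp_sub {Φ Ψ : ℝ → ℂ} (hΦ : HasCompactSupport Φ)
    (hΨ : HasCompactSupport Ψ) :
    HasCompactSupport fun p : ℝ × ℝ => Φ p.2 * Ψ (p.1 - p.2) := by
  refine .intro ((hΨ.isCompact.add hΦ.isCompact).prod hΦ.isCompact) fun p hp => ?_
  by_contra hne
  obtain ⟨hΦp, hΨp⟩ := mul_ne_zero_iff.mp hne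
  exact hp ⟨⟨p.1 - p.2, subset_tsupport _ hΨp, p.2, subset_tsupport _ hΦp, sub_add_cancel _ _⟩,
    subset_tsupport _ hΦp⟩

lemma integrable_fourierChar_mul_symbol_mul {m : ℝ → ℝ} (hm : Continuous m) {Φ : ℝ → ℂ}
    (hΦc : Continuous Φ) (hΦs : HasCompactSupport Φ) (x : ℝ) :
    Integrable fun ξ => (𝐞 (ξ * x) : ℂ) * (m ξ * Φ ξ) :=
  Continuous.integrable_of_hasCompactSupport (by fun_prop) hΦs.mul_left.mul_left

lemma fourierMult_mul_eq_integral_integral {m : ℝ → ℝ} (hm : Continuous m) {F G : ℝ → ℂ}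
    (hFc : Continuous F) (hFi : Integrable F) (hGi : Integrable G)
    (hΦc : Continuous (𝓕 F)) (hΦs : HasCompactSupport (𝓕 F))
    (hΨc : Continuous (𝓕 G)) (hΨs : HasCompactSupport (𝓕 G)) (x : ℝ) :
    fourierMult m (F * G) x =
      ∫ η, ∫ ζ, (𝐞 ((η + ζ) * x) : ℂ) * (m (η + ζ) * (𝓕 F η * 𝓕 G ζ)) := by
  let k : ℝ → ℝ → ℂ := fun ξ η => 𝐞 (ξ * x) * (m ξ * (𝓕 F η * 𝓕 G (ξ - η)))
  have hk : Integrable (Function.uncurry k) (volume.prod volume) :=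
    Continuous.integrable_of_hasCompactSupport (by fun_prop)
      (hasCompactSupport_mul_comp_sub hΦs hΨs).mul_left.mul_left
  calc fourierMult m (F * G) x = ∫ ξ, ∫ η, k ξ η := by
        rw [fourierMult_apply, fourier_mul_eq_convolution hFc hFi hGi
          (hΦc.integrable_of_hasCompactSupport hΦs)]
        simp only [k, convolution_def, ContinuousLinearMap.mul_apply', integral_const_mul]
    _ = ∫ η, ∫ ξ, k ξ η := integral_integral_swap hk
    _ = _ := by
        refine integral_congr_ae (.of_forall fun η => ?_)
        dsimp only
        rw [← integral_add_left_eq_self (fun ξ => k ξ η) η]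
        simp only [k, add_sub_cancel_left]

lemma fourierMult_mul_of_symbol_add {m p₁ q₁ p₂ q₂ : ℝ → ℝ} (hp₁ : Continuous p₁)
    (hq₁ : Continuous q₁) (hp₂ : Continuous p₂) (hq₂ : Continuous q₂)
    (hm : ∀ η ζ, m (η + ζ) = p₁ η * q₁ ζ + p₂ η * q₂ ζ) {F G : ℝ → ℂ}
    (hFc : Continuous F) (hFi : Integrable F) (hGi : Integrable G)
    (hΦc : Continuous (𝓕 F)) (hΦs : HasCompactSupport (𝓕 F))
    (hΨc : Continuous (𝓕 G)) (hΨs : HasCompactSupport (𝓕 G)) (x : ℝ) :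
    fourierMult m (F * G) x =
      fourierMult p₁ F x * fourierMult q₁ G x + fourierMult p₂ F x * fourierMult q₂ G x := by
  have hmc : Continuous m := by
    rw [show m = fun ξ => p₁ ξ * q₁ 0 + p₂ ξ * q₂ 0 from funext fun ξ => by simpa using hm ξ 0]
    fun_prop
  let termF (p : ℝ → ℝ) (η : ℝ) : ℂ := 𝐞 (η * x) * (p η * 𝓕 F η)
  let termG (q : ℝ → ℝ) (ζ : ℝ) : ℂ := 𝐞 (ζ * x) * (q ζ * 𝓕 G ζ)
  have hint {p q : ℝ → ℝ} (hp : Continuous p) (hq : Continuous q) :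
      Integrable (fun z : ℝ × ℝ => termF p z.1 * termG q z.2) (volume.prod volume) :=
    (integrable_fourierChar_mul_symbol_mul hp hΦc hΦs x).mul_prod
      (integrable_fourierChar_mul_symbol_mul hq hΨc hΨs x)
  have hsplit (η ζ : ℝ) : (𝐞 ((η + ζ) * x) : ℂ) * (m (η + ζ) * (𝓕 F η * 𝓕 G ζ)) =
      termF p₁ η * termG q₁ ζ + termF p₂ η * termG q₂ ζ := by
    rw [add_mul, AddChar.map_add_eq_mul, Circle.coe_mul, hm]
    push_cast
    ring
  calc fourierMult m (F * G) x
      = ∫ η, ∫ ζ, (𝐞 ((η + ζ) * x) : ℂ) * (m (η + ζ) * (𝓕 F η * 𝓕 G ζ)) :=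
        fourierMult_mul_eq_integral_integral hmc hFc hFi hGi hΦc hΦs hΨc hΨs x
    _ = ∫ z, (termF p₁ z.1 * termG q₁ z.2 + termF p₂ z.1 * termG q₂ z.2)
          ∂(volume.prod volume) := by
        simp only [hsplit]
        exact (integral_prod _ ((hint hp₁ hq₁).add (hint hp₂ hq₂))).symm
    _ = _ := by
        rw [integral_add (hint hp₁ hq₁) (hint hp₂ hq₂), integral_prod_mul, integral_prod_mul]
        simp only [termF, termG, fourierMult_apply]

theorem cosh_multiplier_product_rule_general
    (a : ℝ) (F G : ℝ → ℂ)
    (hFc : Continuous F) (hFi : MeasureTheory.Integrable F)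
    (hGi : MeasureTheory.Integrable G)
    (hFhat_cont : Continuous (𝓕 F)) (hFhat_supp : HasCompactSupport (𝓕 F))
    (hGhat_cont : Continuous (𝓕 G)) (hGhat_supp : HasCompactSupport (𝓕 G)) :
    ∀ x : ℝ,
      fourierMult (fun ξ => Real.cosh (a * ξ)) (fun y => F y * G y) x
        = fourierMult (fun ξ => Real.cosh (a * ξ)) F x
            * fourierMult (fun ξ => Real.cosh (a * ξ)) G x
          + fourierMult (fun ξ => Real.sinh (a * ξ)) F x
            * fourierMult (fun ξ => Real.sinh (a * ξ)) G x :=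
  fourierMult_mul_of_symbol_add (by fun_prop) (by fun_prop) (by fun_prop) (by fun_prop)
    (fun η ζ => by rw [mul_add, Real.cosh_add]) hFc hFi hGi hFhat_cont hFhat_supp
    hGhat_cont hGhat_supp

theorem cosh_multiplier_product_rule
    (a : ℝ) (ha : 0 < a) (F G : ℝ → ℂ)
    (hFc : Continuous F) (hFi : MeasureTheory.Integrable F)
    (hGc : Continuous G) (hGi : MeasureTheory.Integrable G)
    (hFhat_cont : Continuous (𝓕 F)) (hFhat_supp : HasCompactSupport (𝓕 F))
    (hGhat_cont : Continuous (𝓕 G)) (hGhat_supp : HasCompactSupport (𝓕 G)) :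
    ∀ x : ℝ,
      fourierMult (fun ξ => Real.cosh (a * ξ)) (fun y => F y * G y) x
        = fourierMult (fun ξ => Real.cosh (a * ξ)) F x
            * fourierMult (fun ξ => Real.cosh (a * ξ)) G x
          + fourierMult (fun ξ => Real.sinh (a * ξ)) F x
            * fourierMult (fun ξ => Real.sinh (a * ξ)) G x :=
  cosh_multiplier_product_rule_general a F G hFc hFi hGi hFhat_cont hFhat_supp hGhat_cont hGhat_supp
end
end

section
/- Let ε, μ > 0, d ∈ {1,2}, δ_m ∈ [0,1), and set z_m = -1 + δ_m. Suppose ζ : ℝ×ℝ^d → ℝ and Φ, P : {(t,X,z) : -1 ≤ z ≤ εζ(t,X)} → ℝ are smooth and satisfy: (i) the dimensionless Bernoulli equation ∂_tΦ + z/ε + (ε/2)|∇Φ|² + (ε/(2μ))(∂_zΦ)² = -(1/ε)(P - P_atm) for all -1 ≤ z ≤ εζ(t,X); (ii) the kinematic boundary condition μ∂_tζ = ∂_zΦ - εμ∇ζ·∇Φ at z = εζ(t,X); (iii) the pressure condition P = P_atm at z = εζ(t,X). Define ψ(t,X) = Φ(t,X,εζ(t,X)), Φ_m(t,X) = Φ(t,X,z_m),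 P_m(t,X) = P(t,X,z_m), and the hydrostatic reconstruction ζ_H = (P_m - P_atm - 1 + δ_m)/ε. Then at every (t,X): ζ = ζ_H + ∂_tΦ_m - ∂_tψ + (ε/2)(|∇Φ_m|² - |∇ψ|²) + (ε/(2μ))(∂_zΦ(t,X,z_m))² + (ε/(2μ))(1 + ε²μ|∇ζ|²)(∂_zΦ(t,X,εζ(t,X)))². -/
/-!
Statement 15: the exact reconstruction formula when the pressure is measured at a
point located at a dimensionless height `δ_m` above the flat bottom `z = -1`.
-/

noncomputable section

lemma deriv_comp2 (f : ℝ × ℝ → ℝ) (hf : Differentiable ℝ f) (g : ℝ → ℝ) (a : ℝ)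
    (hg : DifferentiableAt ℝ g a) :
    deriv (fun s => f (s, g s)) a
      = deriv (fun s => f (s, g a)) a + deriv g a * deriv (fun w => f (a, w)) (g a) := by
  have hfd : HasFDerivAt f (fderiv ℝ f (a, g a)) (a, g a) := (hf _).hasFDerivAt
  have hc : HasDerivAt (fun s : ℝ => (s, g s)) ((1 : ℝ), deriv g a) a :=
    (hasDerivAt_id a).prodMk hg.hasDerivAt
  have h1 := (hfd.comp_hasDerivAt a hc).deriv
  have hc2 : HasDerivAt (fun s : ℝ => (s, g a)) ((1 : ℝ), (0 : ℝ)) a :=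
    (hasDerivAt_id a).prodMk (hasDerivAt_const a (g a))
  have h2 := (hfd.comp_hasDerivAt a hc2).deriv
  have hc3 : HasDerivAt (fun w : ℝ => (a, w)) ((0 : ℝ), (1 : ℝ)) (g a) :=
    (hasDerivAt_const (g a) a).prodMk (hasDerivAt_id (g a))
  have h3 := (hfd.comp_hasDerivAt (g a) hc3).deriv
  have hv : ((1 : ℝ), deriv g a) = ((1 : ℝ), (0 : ℝ)) + deriv g a • ((0 : ℝ), (1 : ℝ)) := by
    simp
  simp only [Function.comp_def] at h1 h2 h3
  rw [h1, h2, h3, hv, map_add, map_smul, smul_eq_mul]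

/-- **Exact reconstruction formula for a pressure measurement above the bottom.** -/
theorem exact_reconstruction_formula_measurement_above_bottom
    {d : ℕ} (hd : d = 1 ∨ d = 2) (ε μ δm : ℝ) (hε : 0 < ε) (hμ : 0 < μ)
    (hδm0 : 0 ≤ δm) (hδm1 : δm < 1) (Patm : ℝ)
    (ζ : ℝ → (Fin d → ℝ) → ℝ) (Φ P : ℝ → (Fin d → ℝ) → ℝ → ℝ)
    -- smoothness
    (hζsmooth : ContDiff ℝ (⊤ : ℕ∞) (fun p : ℝ × (Fin d → ℝ) => ζ p.1 p.2))
    (hΦsmooth : ContDiff ℝ (⊤ : ℕ∞) (fun p : ℝ × (Fin d → ℝ) × ℝ => Φ p.1 p.2.1 p.2.2))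
    (hPsmooth : ContDiff ℝ (⊤ : ℕ∞) (fun p : ℝ × (Fin d → ℝ) × ℝ => P p.1 p.2.1 p.2.2))
    -- the measurement point lies inside the fluid domain
    (hdom : ∀ t X, -1 + δm < ε * ζ t X)
    -- (i) dimensionless Bernoulli equation in the fluid domain
    (hBernoulli : ∀ t X z, -1 ≤ z → z ≤ ε * ζ t X →
      dT Φ t X z + z / ε + (ε / 2) * ∑ i, (dXi Φ i t X z) ^ 2
          + (ε / (2 * μ)) * (dZ Φ t X z) ^ 2
        = -(1 / ε) * (P t X z - Patm))
    -- (ii) kinematic boundary condition at the free surface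
    (hKinematic : ∀ t X, μ * dT2 ζ t X
        = dZ Φ t X (ε * ζ t X) - ε * μ * ∑ i, dXi2 ζ i t X * dXi Φ i t X (ε * ζ t X))
    -- (iii) pressure condition at the free surface
    (hPsurf : ∀ t X, P t X (ε * ζ t X) = Patm) :
    ∀ t X,
      ζ t X
        = (P t X (-1 + δm) - Patm - 1 + δm) / ε
          + dT2 (fun t X => Φ t X (-1 + δm)) t X
          - dT2 (fun t X => Φ t X (ε * ζ t X)) t X
          + (ε / 2) * ((∑ i, (dXi2 (fun t X => Φ t X (-1 + δm)) i t X) ^ 2)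
              - ∑ i, (dXi2 (fun t X => Φ t X (ε * ζ t X)) i t X) ^ 2)
          + (ε / (2 * μ)) * (dZ Φ t X (-1 + δm)) ^ 2
          + (ε / (2 * μ)) * (1 + ε ^ 2 * μ * ∑ i, (dXi2 ζ i t X) ^ 2)
              * (dZ Φ t X (ε * ζ t X)) ^ 2 := by
  intro t X
  have hεne : (ε : ℝ) ≠ 0 := ne_of_gt hε
  have hμne : (μ : ℝ) ≠ 0 := ne_of_gt hμ
  have hΦd := hΦsmooth.differentiable (by simp)
  have hζd := hζsmooth.differentiable (by simp)
  have hfT : Differentiable ℝ (fun p : ℝ × ℝ => Φ p.1 X p.2) := by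
    have e : (fun p : ℝ × ℝ => Φ p.1 X p.2)
        = (fun q : ℝ × (Fin d → ℝ) × ℝ => Φ q.1 q.2.1 q.2.2)
          ∘ (fun p : ℝ × ℝ => (p.1, X, p.2)) := rfl
    rw [e]; exact hΦd.comp (by fun_prop)
  have hζT : DifferentiableAt ℝ (fun s => ζ s X) t := by
    have e : (fun s : ℝ => ζ s X)
        = (fun q : ℝ × (Fin d → ℝ) => ζ q.1 q.2) ∘ (fun s : ℝ => (s, X)) := rfl
    rw [e]; exact (hζd _).comp t (by fun_prop)
  have hgT : DifferentiableAt ℝ (fun s => ε * ζ s X) t := (differentiableAt_const ε).mul hζT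
  have hgTderiv : deriv (fun s => ε * ζ s X) t = ε * dT2 ζ t X := by
    rw [deriv_const_mul ε hζT]; rfl
  have hψt : dT2 (fun t X => Φ t X (ε * ζ t X)) t X
      = dT Φ t X (ε * ζ t X) + ε * dT2 ζ t X * dZ Φ t X (ε * ζ t X) := by
    have h := deriv_comp2 (fun p : ℝ × ℝ => Φ p.1 X p.2) hfT (fun s => ε * ζ s X) t hgT
    simpa [dT2, dT, dZ, hgTderiv] using h
  have hψx : ∀ i, dXi2 (fun t X => Φ t X (ε * ζ t X)) i t X
      = dXi Φ i t X (ε * ζ t X) + ε * dXi2 ζ i t X * dZ Φ t X (ε * ζ t X) := by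
    intro i
    have hupd : Differentiable ℝ (fun s : ℝ => Function.update X i s) :=
      fun y => (hasDerivAt_update X i y).differentiableAt
    have hfX : Differentiable ℝ (fun p : ℝ × ℝ => Φ t (Function.update X i p.1) p.2) := by
      have e : (fun p : ℝ × ℝ => Φ t (Function.update X i p.1) p.2)
          = (fun q : ℝ × (Fin d → ℝ) × ℝ => Φ q.1 q.2.1 q.2.2)
            ∘ (fun p : ℝ × ℝ => (t, Function.update X i p.1, p.2)) := rfl
      rw [e]
      exact hΦd.comp ((differentiable_const t).prodMk
        ((hupd.comp differentiable_fst).prodMk differentiable_snd))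
    have hζX : DifferentiableAt ℝ (fun s => ζ t (Function.update X i s)) (X i) := by
      have e : (fun s : ℝ => ζ t (Function.update X i s))
          = (fun q : ℝ × (Fin d → ℝ) => ζ q.1 q.2)
            ∘ (fun s : ℝ => (t, Function.update X i s)) := rfl
      rw [e]
      exact (hζd _).comp (X i) (((differentiable_const t).prodMk hupd) (X i))
    have hgX : DifferentiableAt ℝ (fun s => ε * ζ t (Function.update X i s)) (X i) :=
      (differentiableAt_const ε).mul hζX
    have hgXderiv : deriv (fun s => ε * ζ t (Function.update X i s)) (X i)
        = ε * dXi2 ζ i t X := by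
      rw [deriv_const_mul ε hζX]; rfl
    have h := deriv_comp2 (fun p : ℝ × ℝ => Φ t (Function.update X i p.1) p.2) hfX
      (fun s => ε * ζ t (Function.update X i s)) (X i) hgX
    simpa [dXi2, dXi, dZ, hgXderiv, Function.update_eq_self] using h
  -- Bernoulli at the surface with P = Patm
  have hsurf1 : (-1 : ℝ) ≤ ε * ζ t X := le_of_lt (lt_of_le_of_lt (by linarith) (hdom t X))
  have h1 : dT Φ t X (ε * ζ t X) + ζ t X
      + ε / 2 * ∑ i, dXi Φ i t X (ε * ζ t X) ^ 2
      + ε / (2 * μ) * dZ Φ t X (ε * ζ t X) ^ 2 = 0 := by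
    have h := hBernoulli t X (ε * ζ t X) hsurf1 le_rfl
    rw [hPsurf t X] at h
    linear_combination h - ζ t X * (mul_inv_cancel₀ hεne)
  -- Bernoulli at the measurement point
  have h2 := hBernoulli t X (-1 + δm) (by linarith) (le_of_lt (hdom t X))
  have h3 := hKinematic t X
  have hZH : (P t X (-1 + δm) - Patm - 1 + δm) / ε
      = -dT Φ t X (-1 + δm) - ε / 2 * ∑ i, dXi Φ i t X (-1 + δm) ^ 2
        - ε / (2 * μ) * dZ Φ t X (-1 + δm) ^ 2 := by
    linear_combination h2
  have hζt' : dT2 ζ t X = dZ Φ t X (ε * ζ t X) / μ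
      - ε * ∑ i, dXi2 ζ i t X * dXi Φ i t X (ε * ζ t X) := by
    linear_combination (1/μ) * h3
      - (dT2 ζ t X + ε * ∑ i, dXi2 ζ i t X * dXi Φ i t X (ε * ζ t X))
        * (mul_inv_cancel₀ hμne)
  have em1 : dT2 (fun t X => Φ t X (-1 + δm)) t X = dT Φ t X (-1 + δm) := rfl
  have em2 : ∀ i, dXi2 (fun t X => Φ t X (-1 + δm)) i t X = dXi Φ i t X (-1 + δm) :=
    fun i => rfl
  have hsum : ∑ i, (dXi Φ i t X (ε * ζ t X) + ε * dXi2 ζ i t X * dZ Φ t X (ε * ζ t X)) ^ 2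
      = ∑ i, dXi Φ i t X (ε * ζ t X) ^ 2
        + 2 * ε * dZ Φ t X (ε * ζ t X)
            * ∑ i, dXi2 ζ i t X * dXi Φ i t X (ε * ζ t X)
        + ε ^ 2 * dZ Φ t X (ε * ζ t X) ^ 2 * ∑ i, dXi2 ζ i t X ^ 2 := by
    rw [Finset.mul_sum, Finset.mul_sum, ← Finset.sum_add_distrib, ← Finset.sum_add_distrib]
    exact Finset.sum_congr rfl fun i _ => by ring
  rw [em1, hψt, hZH, hζt']
  simp only [em2, hψx]
  rw [hsum]
  linear_combination h1
    - (ε ^ 3 / 2) * (∑ i, dXi2 ζ i t X ^ 2) * dZ Φ t X (ε * ζ t X) ^ 2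
      * (mul_inv_cancel₀ hμne)
end
end
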